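/- Let G be a connected graph, let (X⁺,X⁻) be disjoint vertex sets, let c be a vertex and r an integer with X⁺ ⊆ B_G(c,r) and X⁻ ∩ B_G(c,r) = ∅. Let (A₁,A₂) be a separation of G with c ∈ A₁ and X⁺ ∪ X⁻ ⊆ A₂, and S = A₁ ∩ A₂. Define r⁺(v), r⁻(v) for v ∈ S as: r⁺(v) = max{dist_G(v,x) : x ∈ (X⁺∪X⁻) ∩ B_G(v, r - dist_G(c,v))}, r⁻(v) = min{dist_G(v,x) : x ∈ X⁻}. Then A₂ ∩ ⋃_{v∈S} B_G(v,r⁺(v)) ⊆ A₂ ∩ B_G(c,r) ⊆ A₂ ∩ ⋃_{v∈S} B_G(v, r⁻(v)-1). -/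

import Mathlib

/-!
Any geodesic from `c` to a vertex `u ∈ A₂` must cross the separator `S = A₁ ∩ A₂` at some `v`, so
`dist c v + dist v u = dist c u`. If `u ∈ B(c, r)`, then for `x ∈ X⁻` the triangle inequality
`r < dist c x ≤ dist c v + dist v x` yields `dist v u < dist v x`. The first inclusion is just the
triangle inequality through `v`.
-/

namespace SimpleGraph

variable {V : Type*} {G : SimpleGraph V}

theorem Walk.exists_mem_support_inter_of_separation {A₁ A₂ : Set V} (hcover : A₁ ∪ A₂ = Set.univ)
    (hsep : ∀ a b, a ∈ A₁ \ A₂ → b ∈ A₂ \ A₁ → ¬ G.Adj a b) {a u : V} (p : G.Walk a u)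
    (ha : a ∈ A₁) (hu : u ∈ A₂) : ∃ v ∈ p.support, v ∈ A₁ ∩ A₂ := by
  induction p with
  | nil => exact ⟨_, Walk.start_mem_support _, ha, hu⟩
  | @cons a b u hab p ih =>
    by_cases ha₂ : a ∈ A₂
    · exact ⟨a, (Walk.cons hab p).start_mem_support, ha, ha₂⟩
    have hb₁ : b ∈ A₁ := by
      by_contra hb₁
      have hb : b ∈ A₁ ∪ A₂ := hcover ▸ Set.mem_univ b
      exact hsep a b ⟨ha, ha₂⟩ ⟨hb.resolve_left hb₁, hb₁⟩ hab
    obtain ⟨v, hv, hvS⟩ := ih hb₁ hu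
    exact ⟨v, List.mem_cons_of_mem a hv, hvS⟩

theorem Walk.dist_add_dist_le_length {u v w : V} (p : G.Walk u w) (hv : v ∈ p.support) :
    G.dist u v + G.dist v w ≤ p.length := by
  classical
  calc G.dist u v + G.dist v w
      ≤ (p.takeUntil v hv).length + (p.dropUntil v hv).length :=
        Nat.add_le_add (dist_le _) (dist_le _)
    _ = p.length := by rw [← Walk.length_append, Walk.take_spec]

theorem Connected.exists_mem_inter_dist_add_dist_eq_of_separation (hG : G.Connected) {A₁ A₂ : Set V}
    (hcover : A₁ ∪ A₂ = Set.univ) (hsep : ∀ a b, a ∈ A₁ \ A₂ → b ∈ A₂ \ A₁ → ¬ G.Adj a b)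
    {a u : V} (ha : a ∈ A₁) (hu : u ∈ A₂) :
    ∃ v ∈ A₁ ∩ A₂, G.dist a v + G.dist v u = G.dist a u := by
  obtain ⟨p, hp⟩ := hG.exists_walk_length_eq_dist a u
  obtain ⟨v, hv, hvS⟩ := p.exists_mem_support_inter_of_separation hcover hsep ha hu
  exact ⟨v, hvS, le_antisymm (hp ▸ p.dist_add_dist_le_length hv) hG.dist_triangle⟩

end SimpleGraph

theorem stmt10_general {V : Type*} (G : SimpleGraph V) (hG : G.Connected)
    (Xp Xm : Set V)
    (c : V) (r : ℤ)
    (hm : ∀ x ∈ Xm, ¬ ((G.dist c x : ℤ) ≤ r))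
    (A₁ A₂ : Set V) (hcover : A₁ ∪ A₂ = Set.univ)
    (hsep : ∀ a b, a ∈ A₁ \ A₂ → b ∈ A₂ \ A₁ → ¬ G.Adj a b)
    (hc : c ∈ A₁) :
    -- `A₂ ∩ ⋃_{v ∈ S} B(v, r⁺(v)) ⊆ A₂ ∩ B(c, r) ⊆ A₂ ∩ ⋃_{v ∈ S} B(v, r⁻(v) - 1)`
    A₂ ∩ {u | ∃ v ∈ A₁ ∩ A₂, ∃ x ∈ Xp ∪ Xm,
        (G.dist v x : ℤ) ≤ r - G.dist c v ∧ G.dist v u ≤ G.dist v x}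
      ⊆ A₂ ∩ {u | (G.dist c u : ℤ) ≤ r} ∧
    A₂ ∩ {u | (G.dist c u : ℤ) ≤ r}
      ⊆ A₂ ∩ {u | ∃ v ∈ A₁ ∩ A₂, ∀ x ∈ Xm, G.dist v u < G.dist v x} := by
  constructor
  · rintro u ⟨hu, v, -, x, -, hvx, hvu⟩
    have hcu : G.dist c u ≤ G.dist c v + G.dist v u := hG.dist_triangle
    exact ⟨hu, show (G.dist c u : ℤ) ≤ r by omega⟩
  · rintro u ⟨hu, hcu : (G.dist c u : ℤ) ≤ r⟩
    obtain ⟨v, hvS, hcvu⟩ := hG.exists_mem_inter_dist_add_dist_eq_of_separation hcover hsep hc hu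
    refine ⟨hu, v, hvS, fun x hx => ?_⟩
    have hcx : G.dist c x ≤ G.dist c v + G.dist v x := hG.dist_triangle
    have := hm x hx
    omega

theorem stmt10 {V : Type*} [Fintype V] (G : SimpleGraph V) (hG : G.Connected)
    (Xp Xm : Set V) (hdisj : Disjoint Xp Xm)
    (c : V) (r : ℤ)
    (hp : ∀ x ∈ Xp, (G.dist c x : ℤ) ≤ r)
    (hm : ∀ x ∈ Xm, ¬ ((G.dist c x : ℤ) ≤ r))
    (A₁ A₂ : Set V) (hcover : A₁ ∪ A₂ = Set.univ)
    (hsep : ∀ a b, a ∈ A₁ \ A₂ → b ∈ A₂ \ A₁ → ¬ G.Adj a b)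
    (hc : c ∈ A₁) (hX : Xp ∪ Xm ⊆ A₂) :
    -- `A₂ ∩ ⋃_{v ∈ S} B(v, r⁺(v)) ⊆ A₂ ∩ B(c, r) ⊆ A₂ ∩ ⋃_{v ∈ S} B(v, r⁻(v) - 1)`
    A₂ ∩ {u | ∃ v ∈ A₁ ∩ A₂, ∃ x ∈ Xp ∪ Xm,
        (G.dist v x : ℤ) ≤ r - G.dist c v ∧ G.dist v u ≤ G.dist v x}
      ⊆ A₂ ∩ {u | (G.dist c u : ℤ) ≤ r} ∧
    A₂ ∩ {u | (G.dist c u : ℤ) ≤ r}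
      ⊆ A₂ ∩ {u | ∃ v ∈ A₁ ∩ A₂, ∀ x ∈ Xm, G.dist v u < G.dist v x} :=
  stmt10_general G hG Xp Xm c r hm A₁ A₂ hcover hsep hc
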